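/- Let T be a theory over a one-sorted first-order signature. Then the following are equivalent: (1) T is stably finite and finitely smooth; (2) T is stably infinite and has a strong pre-witness. -/

import Mathlib

open FirstOrder FirstOrder.Language

universe u v

/-- `M` (with structure `inst`) is a model of the theory `T`. -/
def ModelsT (L : FirstOrder.Language.{u, v}) (T : L.Theory) (M : Type) (inst : L.Structure M) : Prop :=
  letI := inst
  T.Model M

/-- Realization of a formula, with the structure instance given explicitly. -/
def RealizeIn (L : FirstOrder.Language.{u, v}) (M : Type) (inst : L.Structure M) {α : Type}
    (φ : L.Formula α) (v : α → M) : Prop :=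
  letI := inst
  φ.Realize v

/-- A valuation `v` satisfies the arrangement `δ_V^E` determined on the finite variable
set `V` by the equivalence relation `E`. -/
def RealizesArr {M : Type} (E : Setoid ℕ) (V : Finset ℕ) (v : ℕ → M) : Prop :=
  ∀ x ∈ V, ∀ y ∈ V, (E.r x y ↔ v x = v y)

/-- `T` is stably finite: every quantifier-free formula satisfied in a model of `T` is
satisfied in a finite model of `T` of no greater cardinality. -/
def StablyFiniteT (L : FirstOrder.Language.{u, v}) (T : L.Theory) : Prop :=
  ∀ φ : L.Formula ℕ, φ.IsQF →
    ∀ (M : Type) (inst : L.Structure M), ModelsT L T M inst →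
      ∀ v : ℕ → M, RealizeIn L M inst φ v →
        ∃ (N : Type) (instN : L.Structure N), ModelsT L T N instN ∧ Finite N ∧
          Cardinal.mk N ≤ Cardinal.mk M ∧ ∃ w : ℕ → N, RealizeIn L N instN φ w

/-- `T` is finitely smooth: for every quantifier-free formula `φ`, model of `T` with a
valuation satisfying `φ`, and finite cardinal `κ` at least the size of the model, there
is a model of `T` of size exactly `κ` with a valuation satisfying `φ`. -/
def FinitelySmoothT (L : FirstOrder.Language.{u, v}) (T : L.Theory) : Prop :=
  ∀ φ : L.Formula ℕ, φ.IsQF →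
    ∀ (M : Type) (inst : L.Structure M), ModelsT L T M inst →
      ∀ v : ℕ → M, RealizeIn L M inst φ v →
        ∀ κ : ℕ, Cardinal.mk M ≤ (κ : Cardinal) →
          ∃ (N : Type) (instN : L.Structure N), ModelsT L T N instN ∧
            Cardinal.mk N = (κ : Cardinal) ∧ ∃ w : ℕ → N, RealizeIn L N instN φ w

/-- `T` is smooth: for every quantifier-free formula `φ`, model of `T` with a valuation
satisfying `φ`, and cardinal `κ` at least the size of the model, there is a model of `T`
of size exactly `κ` with a valuation satisfying `φ`. -/
def SmoothT (L : FirstOrder.Language.{u, v}) (T : L.Theory) : Prop :=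
  ∀ φ : L.Formula ℕ, φ.IsQF →
    ∀ (M : Type) (inst : L.Structure M), ModelsT L T M inst →
      ∀ v : ℕ → M, RealizeIn L M inst φ v →
        ∀ κ : Cardinal, Cardinal.mk M ≤ κ →
          ∃ (N : Type) (instN : L.Structure N), ModelsT L T N instN ∧
            Cardinal.mk N = κ ∧ ∃ w : ℕ → N, RealizeIn L N instN φ w

/-- `T` is stably infinite: every quantifier-free formula satisfiable in some model of `T`
is satisfiable in some model of `T` with infinite domain. -/
def StablyInfiniteT (L : FirstOrder.Language.{u, v}) (T : L.Theory) : Prop :=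
  ∀ φ : L.Formula ℕ, φ.IsQF →
    (∃ (M : Type) (inst : L.Structure M), ModelsT L T M inst ∧
      ∃ v : ℕ → M, RealizeIn L M inst φ v) →
    ∃ (M : Type) (inst : L.Structure M), ModelsT L T M inst ∧ Infinite M ∧
      ∃ v : ℕ → M, RealizeIn L M inst φ v

/-- `wit` is a pre-witness for `T`: it maps quantifier-free formulas to quantifier-free
formulas; `φ` and `∃x⃗. wit(φ)` (where `x⃗ = vars(wit(φ)) \ vars(φ)`) hold in exactly the
same models-with-valuations of `T`; and if `wit(φ)` is satisfiable in a model of `T`,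
then `φ` is satisfied in some model of `T` under a valuation in which every element of
the domain is the value of some variable of `wit(φ)`. -/
def IsPreWitness (L : FirstOrder.Language.{u, v}) (T : L.Theory) (wit : L.Formula ℕ → L.Formula ℕ) :
    Prop :=
  (∀ φ : L.Formula ℕ, φ.IsQF → (wit φ).IsQF) ∧
  (∀ φ : L.Formula ℕ, φ.IsQF →
    ∀ (M : Type) (inst : L.Structure M), ModelsT L T M inst → ∀ v : ℕ → M,
      (RealizeIn L M inst φ v ↔
        ∃ w : ℕ → M, (∀ x : ℕ, x ∉ (wit φ).freeVarFinset \ φ.freeVarFinset → w x = v x) ∧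
          RealizeIn L M inst (wit φ) w)) ∧
  (∀ φ : L.Formula ℕ, φ.IsQF →
    (∃ (M : Type) (inst : L.Structure M), ModelsT L T M inst ∧
      ∃ v : ℕ → M, RealizeIn L M inst (wit φ) v) →
    ∃ (M : Type) (inst : L.Structure M), ModelsT L T M inst ∧
      ∃ v : ℕ → M, RealizeIn L M inst φ v ∧
        ∀ a : M, ∃ x ∈ (wit φ).freeVarFinset, v x = a)

/-- `wit` is a strong pre-witness for `T`: a pre-witness such that in addition, for every
quantifier-free `φ`, finite variable set `V`, and arrangement `δ_V` of `V`, if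
`wit(φ) ∧ δ_V` is satisfiable in a model of `T`, then it is satisfied in some model of `T`
under a valuation in which every element of the domain is the value of some variable of
`wit(φ) ∧ δ_V`. -/
def IsStrongPreWitness (L : FirstOrder.Language.{u, v}) (T : L.Theory)
    (wit : L.Formula ℕ → L.Formula ℕ) : Prop :=
  IsPreWitness L T wit ∧
  ∀ φ : L.Formula ℕ, φ.IsQF → ∀ (V : Finset ℕ) (E : Setoid ℕ),
    (∃ (M : Type) (inst : L.Structure M), ModelsT L T M inst ∧
      ∃ v : ℕ → M, RealizeIn L M inst (wit φ) v ∧ RealizesArr E V v) →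
    ∃ (M : Type) (inst : L.Structure M), ModelsT L T M inst ∧
      ∃ v : ℕ → M, RealizeIn L M inst (wit φ) v ∧ RealizesArr E V v ∧
        ∀ a : M, ∃ x ∈ (wit φ).freeVarFinset ∪ V, v x = a

/-!
From stable finiteness and finite smoothness, the witness of `φ` is the disjunction, over the
arrangements `δ_P` of the variables of `φ`, of `φ ∧ δ_P ∧ "m_P fresh variables are distinct"`,
where `m_P` is the least size of a model of `T` satisfying `φ ∧ δ_P`. A valuation satisfying a
disjunct takes at least `m_P` values on the variables in sight, so finite smoothness pumps the
minimal model to exactly that many elements, and relabelling makes it covered by those variables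
while realising the same arrangement. Stable infiniteness comes from an ultraproduct of the models
of unbounded finite size that finite smoothness provides.

Conversely, a model covered by finitely many variables has as many elements as the arrangement it
realises has classes. The arrangement of the given valuation thus yields stable finiteness, and
padding a valuation in an infinite model (stable infiniteness) with fresh distinct values yields
models of every larger finite size.
-/

section Combinatorics

variable {α M A : Type*}

open Finset

theorem Finset.card_image_le_card_image_of_eq_imp [DecidableEq M] [DecidableEq A] {s : Finset α}
    {f : α → M} {g : α → A} (h : ∀ x ∈ s, ∀ y ∈ s, f x = f y → g x = g y) :
    #(s.image g) ≤ #(s.image f) := by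
  have hinj : Set.InjOn Prod.fst (s.image fun x => (f x, g x) : Set (M × A)) := by
    intro _ hp _ hq hpq
    obtain ⟨x, hx, rfl⟩ := mem_image.1 hp
    obtain ⟨y, hy, rfl⟩ := mem_image.1 hq
    exact Prod.ext hpq (h x hx y hy hpq)
  calc #(s.image g) = #((s.image fun x => (f x, g x)).image Prod.snd) := by rw [image_image]; rfl
    _ ≤ #(s.image fun x => (f x, g x)) := card_image_le
    _ = #((s.image fun x => (f x, g x)).image Prod.fst) := (card_image_of_injOn hinj).symm
    _ = #(s.image f) := by rw [image_image]; rfl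

theorem Finset.card_image_eq_card_image_of_eq_iff [DecidableEq M] [DecidableEq A] {s : Finset α}
    {f : α → M} {g : α → A} (h : ∀ x ∈ s, ∀ y ∈ s, (f x = f y ↔ g x = g y)) :
    #(s.image f) = #(s.image g) :=
  le_antisymm (card_image_le_card_image_of_eq_imp fun x hx y hy => (h x hx y hy).2)
    (card_image_le_card_image_of_eq_imp fun x hx y hy => (h x hx y hy).1)

theorem Finset.exists_eqOn_compl_injOn_mapsTo [DecidableEq α] (v : α → M) (Y : Finset α)
    {S : Set M} (h : (#Y : Cardinal) ≤ Cardinal.mk S) :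
    ∃ w : α → M, (∀ x ∉ Y, w x = v x) ∧ Set.InjOn w Y ∧ Set.MapsTo w Y S := by
  obtain ⟨e⟩ : Nonempty (Y ↪ S) := Cardinal.lift_mk_le'.1 (by simpa using h)
  refine ⟨fun x => if hx : x ∈ Y then e ⟨x, hx⟩ else v x, fun x hx => dif_neg hx, ?_, ?_⟩
  · intro x hx y hy hxy
    simp only [Finset.mem_coe] at hx hy
    simp only [dif_pos hx, dif_pos hy] at hxy
    exact congrArg Subtype.val (e.injective (Subtype.val_injective hxy))
  · intro x hx
    simp only [Finset.mem_coe] at hx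
    simp [dif_pos hx]

theorem Cardinal.mk_eq_card_image_of_forall_exists [DecidableEq A] {W : Finset α} {u : α → A}
    (hcov : ∀ a, ∃ x ∈ W, u x = a) : Cardinal.mk A = #(W.image u) := by
  have huniv : (W.image u : Set A) = Set.univ := Set.eq_univ_of_forall fun a => by
    obtain ⟨x, hx, rfl⟩ := hcov a
    exact mem_coe.2 (mem_image_of_mem u hx)
  rw [← Cardinal.mk_univ, ← huniv, Finset.coe_sort_coe, Cardinal.mk_coe_finset]

theorem Finset.exists_eqOn_surjective_of_mk_eq [Nonempty α] [DecidableEq M] {U W : Finset α}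
    (hUW : U ⊆ W) {v : α → M} {w : α → A} (hw : ∀ x ∈ U, ∀ y ∈ U, (w x = w y ↔ v x = v y))
    (hcard : Cardinal.mk A = #(W.image v)) :
    ∃ u : α → A, (∀ x ∈ U, u x = w x) ∧ (∀ x ∈ W, ∀ y ∈ W, (u x = u y ↔ v x = v y)) ∧
      ∀ a, ∃ x ∈ W, u x = a := by
  classical
  have : Finite A := Cardinal.lt_aleph0_iff_finite.1 (hcard ▸ Cardinal.natCast_lt_aleph0)
  let _ := Fintype.ofFinite A
  rw [Cardinal.mk_fintype, Nat.cast_inj] at hcard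
  have hinv : ∀ x ∈ U, v (Function.invFunOn w U (w x)) = v x := fun x hx =>
    (hw _ (Function.invFunOn_mem ⟨x, hx, rfl⟩) x hx).1 (Function.invFunOn_eq ⟨x, hx, rfl⟩)
  -- a bijection `A ≃ W.image v` extending `w x ↦ v x` on `U`, well defined and injective by `hw`
  obtain ⟨g, hg⟩ := Set.MapsTo.exists_equiv_extend_of_card_eq hcard
    (f := v ∘ Function.invFunOn w U) (s := w '' U)
    (by
      rintro _ ⟨x, hx, rfl⟩
      exact mem_coe.2 (mem_image_of_mem v (hUW (Function.invFunOn_mem ⟨x, hx, rfl⟩))))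
    (by
      rintro _ ⟨x, hx, rfl⟩ _ ⟨y, hy, rfl⟩ hxy
      simp only [Function.comp_apply, hinv x hx, hinv y hy] at hxy
      exact (hw x hx y hy).2 hxy)
  refine ⟨fun x => if hx : x ∈ W then g.symm ⟨v x, mem_image_of_mem v hx⟩ else w x, ?_, ?_, ?_⟩
  · intro x hx
    simp only [dif_pos (hUW hx)]
    rw [Equiv.symm_apply_eq]
    exact Subtype.ext ((hg _ ⟨x, hx, rfl⟩).trans (hinv x hx)).symm
  · intro x hx y hy
    simp only [dif_pos hx, dif_pos hy, g.symm.injective.eq_iff, Subtype.mk.injEq]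
  · intro a
    obtain ⟨x, hx, hxa⟩ := mem_image.1 (g a).2
    refine ⟨x, hx, ?_⟩
    simp only [dif_pos hx]
    rw [Equiv.symm_apply_eq]
    exact Subtype.ext hxa

end Combinatorics

namespace FirstOrder.Language

variable {L : Language.{u, v}}

open Finset

namespace BoundedFormula

variable {α β : Type*} {n : ℕ}

theorem isQF_foldr {op : L.BoundedFormula α n → L.BoundedFormula α n → L.BoundedFormula α n}
    (hop : ∀ {φ ψ}, φ.IsQF → ψ.IsQF → (op φ ψ).IsQF) {e : L.BoundedFormula α n} (he : e.IsQF)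
    {l : List (L.BoundedFormula α n)} (hl : ∀ φ ∈ l, φ.IsQF) : (l.foldr op e).IsQF := by
  induction l with
  | nil => exact he
  | cons φ l ih => exact hop (hl φ (by simp)) (ih fun ψ hψ => hl ψ (by simp [hψ]))

theorem IsQF.iInf [Finite β] {f : β → L.BoundedFormula α n} (h : ∀ b, (f b).IsQF) :
    (iInf f).IsQF :=
  isQF_foldr IsQF.inf IsQF.top (by simp [h])

theorem IsQF.iSup [Finite β] {f : β → L.BoundedFormula α n} (h : ∀ b, (f b).IsQF) :
    (iSup f).IsQF :=
  isQF_foldr IsQF.sup isQF_bot (by simp [h])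

variable [DecidableEq α]

@[simp]
theorem freeVarFinset_inf (φ ψ : L.BoundedFormula α n) :
    (φ ⊓ ψ).freeVarFinset = φ.freeVarFinset ∪ ψ.freeVarFinset := by
  simp [Min.min, BoundedFormula.not, BoundedFormula.freeVarFinset]

@[simp]
theorem freeVarFinset_sup (φ ψ : L.BoundedFormula α n) :
    (φ ⊔ ψ).freeVarFinset = φ.freeVarFinset ∪ ψ.freeVarFinset := by
  simp [Max.max, BoundedFormula.not, BoundedFormula.freeVarFinset]

theorem freeVarFinset_subset_foldr
    {op : L.BoundedFormula α n → L.BoundedFormula α n → L.BoundedFormula α n}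
    (hop : ∀ φ ψ, (op φ ψ).freeVarFinset = φ.freeVarFinset ∪ ψ.freeVarFinset)
    (e : L.BoundedFormula α n) {l : List (L.BoundedFormula α n)} {φ : L.BoundedFormula α n}
    (hφ : φ ∈ l) : φ.freeVarFinset ⊆ (l.foldr op e).freeVarFinset := by
  induction l with
  | nil => simp at hφ
  | cons ψ l ih =>
    rw [List.foldr_cons, hop]
    rcases List.mem_cons.1 hφ with rfl | hφ
    · exact subset_union_left
    · exact (ih hφ).trans subset_union_right

theorem freeVarFinset_subset_iInf [Finite β] (f : β → L.BoundedFormula α n) (b : β) :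
    (f b).freeVarFinset ⊆ (iInf f).freeVarFinset :=
  freeVarFinset_subset_foldr freeVarFinset_inf _ (by simp)

theorem freeVarFinset_subset_iSup [Finite β] (f : β → L.BoundedFormula α n) (b : β) :
    (f b).freeVarFinset ⊆ (iSup f).freeVarFinset :=
  freeVarFinset_subset_foldr freeVarFinset_sup _ (by simp)

end BoundedFormula

namespace Formula

variable {α : Type*} [DecidableEq α] {M : Type*} [L.Structure M]

theorem realize_congr {φ : L.Formula α} {v w : α → M} (h : ∀ x ∈ φ.freeVarFinset, v x = w x) :
    φ.Realize v ↔ φ.Realize w :=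
  (BoundedFormula.realize_restrictFreeVar (f := id) (v := fun x => v x) v fun _ => rfl).symm.trans
    (BoundedFormula.realize_restrictFreeVar w fun x => h x x.2)

noncomputable def arrangement (V : Finset α) (P : Finset (α × α)) : L.Formula α :=
  iInf fun p : V ×ˢ V =>
    if (p : α × α) ∈ P then (Term.var p.1.1).equal (Term.var p.1.2)
    else ((Term.var p.1.1).equal (Term.var p.1.2)).not

theorem isQF_arrangement (V : Finset α) (P : Finset (α × α)) :
    (arrangement (L := L) V P).IsQF :=
  BoundedFormula.IsQF.iInf fun _ => by
    split_ifs
    · exact (BoundedFormula.IsAtomic.equal _ _).isQF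
    · exact (BoundedFormula.IsAtomic.equal _ _).isQF.not

theorem subset_freeVarFinset_arrangement (V : Finset α) (P : Finset (α × α)) :
    V ⊆ (arrangement (L := L) V P).freeVarFinset := by
  intro x hx
  refine BoundedFormula.freeVarFinset_subset_iInf _ ⟨(x, x), mk_mem_product hx hx⟩ ?_
  split_ifs <;> simp [Term.equal, Term.bdEqual, BoundedFormula.freeVarFinset, Term.relabel,
    Term.varFinsetLeft]

theorem realize_arrangement {V : Finset α} {P : Finset (α × α)} {v : α → M} :
    (arrangement (L := L) V P).Realize v ↔ ∀ x ∈ V, ∀ y ∈ V, ((x, y) ∈ P ↔ v x = v y) := by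
  simp only [arrangement, realize_iInf, Subtype.forall, mem_product, Prod.forall, and_imp]
  refine forall_congr' fun x => ⟨fun h hx y hy => ?_, fun h y hx hy => ?_⟩
  · specialize h y hx hy
    split_ifs at h <;> simp_all
  · specialize h hx y hy
    split_ifs <;> simp_all

theorem exists_realize_arrangement (V : Finset α) (v : α → M) :
    ∃ P ⊆ V ×ˢ V, (arrangement (L := L) V P).Realize v := by
  classical
  refine ⟨(V ×ˢ V).filter fun p => v p.1 = v p.2, filter_subset _ _, ?_⟩
  exact realize_arrangement.2 fun x hx y hy => by simp [hx, hy]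

theorem realize_arrangement_iff_of_realize {N : Type*} [L.Structure N] {V : Finset α}
    {P : Finset (α × α)} {v : α → M} {w : α → N}
    (hv : (arrangement (L := L) V P).Realize v) :
    (arrangement (L := L) V P).Realize w ↔ ∀ x ∈ V, ∀ y ∈ V, (w x = w y ↔ v x = v y) := by
  rw [realize_arrangement] at hv ⊢
  exact forall₂_congr fun x hx => forall₂_congr fun y hy => by rw [hv x hx y hy]; exact comm

theorem realize_arrangement_diag {V : Finset α} {v : α → M} :
    (arrangement (L := L) V V.diag).Realize v ↔ Set.InjOn v V := by
  rw [realize_arrangement]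
  refine ⟨fun h x hx y hy hxy => (mem_diag.1 ((h x hx y hy).2 hxy)).2, fun h x hx y hy => ?_⟩
  simp only [mem_diag, hx, true_and]
  exact ⟨fun hxy => hxy ▸ rfl, fun hxy => h hx hy hxy⟩

noncomputable def withArrangement (φ : L.Formula α) (P : Finset (α × α)) : L.Formula α :=
  φ ⊓ arrangement φ.freeVarFinset P

theorem isQF_withArrangement {φ : L.Formula α} (hφ : φ.IsQF) (P : Finset (α × α)) :
    (φ.withArrangement P).IsQF :=
  hφ.inf (isQF_arrangement _ _)

end Formula

def freshVars (s : Finset ℕ) (r : ℕ) : Finset ℕ :=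
  Finset.Ico (s.sup id + 1) (s.sup id + 1 + r)

theorem card_freshVars (s : Finset ℕ) (r : ℕ) : #(freshVars s r) = r := by
  simp [freshVars]

theorem disjoint_freshVars (s : Finset ℕ) (r : ℕ) : Disjoint s (freshVars s r) :=
  disjoint_left.2 fun x hx hy => by
    have := le_sup (f := id) hx
    simp only [freshVars, mem_Ico, id] at hy this
    omega

theorem exists_eqOn_card_image_eq {M : Type*} [DecidableEq M] [Infinite M] (v : ℕ → M)
    (V : Finset ℕ) {n : ℕ} (hn : #(V.image v) ≤ n) :
    ∃ (Z : Finset ℕ) (w : ℕ → M), (∀ x ∈ V, w x = v x) ∧ #((V ∪ Z).image w) = n := by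
  set Z := freshVars V (n - #(V.image v))
  have hS : Set.Infinite (↑(V.image v) : Set M)ᶜ := (V.image v).finite_toSet.infinite_compl
  have : Infinite ↥(↑(V.image v) : Set M)ᶜ := hS.to_subtype
  obtain ⟨w, hwv, hinj, hmaps⟩ := exists_eqOn_compl_injOn_mapsTo v Z (S := (↑(V.image v))ᶜ)
    (Cardinal.natCast_le_aleph0.trans (Cardinal.infinite_iff.1 this))
  have hwV : ∀ x ∈ V, w x = v x := fun x hx => hwv x (disjoint_left.1 (disjoint_freshVars _ _) hx)
  have hdisj : Disjoint (V.image v) (Z.image w) := by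
    rw [disjoint_right]
    rintro _ hb
    obtain ⟨z, hz, rfl⟩ := mem_image.1 hb
    exact hmaps hz
  refine ⟨Z, w, hwV, ?_⟩
  rw [image_union, image_congr hwV, card_union_of_disjoint hdisj, card_image_of_injOn hinj,
    card_freshVars]
  omega

namespace Theory

variable (T : L.Theory)

theorem exists_infinite_model_of_natCast_lt_mk {α : Type} {φ : L.Formula α} (N : ℕ → Type)
    [∀ k, L.Structure (N k)] [∀ k, N k ⊨ T] (w : ∀ k, α → N k) (hw : ∀ k, φ.Realize (w k))
    (hcard : ∀ k : ℕ, (k : Cardinal) < Cardinal.mk (N k)) :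
    ∃ (A : Type) (inst : L.Structure A), ModelsT L T A inst ∧ Infinite A ∧
      ∃ v : α → A, RealizeIn L A inst φ v := by
  have _ : ∀ k, Nonempty (N k) := fun k => Cardinal.mk_ne_zero_iff.1 (hcard k).ne_bot
  have e : ∀ k, Fin k ↪ N k := fun k =>
    (Cardinal.lift_mk_le'.1 (by simpa using (hcard k).le)).some
  let U := Filter.hyperfilter ℕ
  let g : ℕ → ∀ k, N k := fun i k => if h : i < k then e k ⟨i, h⟩ else Classical.arbitrary _
  refine ⟨(U : Filter ℕ).Product N, Ultraproduct.structure, ⟨fun ψ hψ => ?_⟩,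
    Infinite.of_injective (fun i => ((g i : ∀ k, N k) : (U : Filter ℕ).Product N)) ?_,
    fun a => ((fun k => w k a : ∀ k, N k) : (U : Filter ℕ).Product N), ?_⟩
  · exact (Ultraproduct.sentence_realize ψ).2 (.of_forall fun k => realize_sentence_of_mem T hψ)
  · intro i j hij
    have hev : ∀ᶠ k in (U : Filter ℕ), g i k = g j k := Quotient.exact' hij
    have hlarge : ∀ᶠ k in (U : Filter ℕ), max i j < k :=
      Filter.hyperfilter_le_cofinite (Nat.cofinite_eq_atTop ▸ Filter.eventually_gt_atTop _)
    obtain ⟨k, hk, hmax⟩ := (hev.and hlarge).exists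
    simp only [g, dif_pos (lt_of_le_of_lt (le_max_left i j) hmax),
      dif_pos (lt_of_le_of_lt (le_max_right i j) hmax)] at hk
    exact congrArg Fin.val ((e k).injective hk)
  · exact (Ultraproduct.realize_formula_cast φ fun a k => w k a).2 (.of_forall hw)

def finiteModelCards (ψ : L.Formula ℕ) : Set ℕ :=
  {n | ∃ (M : Type) (inst : L.Structure M), ModelsT L T M inst ∧ Finite M ∧ Nat.card M = n ∧
    ∃ v : ℕ → M, RealizeIn L M inst ψ v}

-- `0` when `ψ` has no finite model of `T`, since `sInf ∅ = 0`.
noncomputable def minModelCard (ψ : L.Formula ℕ) : ℕ :=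
  sInf (T.finiteModelCards ψ)

variable {T}

theorem minModelCard_mem (hSF : StablyFiniteT L T) {ψ : L.Formula ℕ} (hψ : ψ.IsQF)
    {M : Type} [L.Structure M] [M ⊨ T] {v : ℕ → M} (hv : ψ.Realize v) :
    T.minModelCard ψ ∈ T.finiteModelCards ψ := by
  obtain ⟨N, instN, hN, hfin, -, w, hw⟩ := hSF ψ hψ M _ ‹M ⊨ T› v hv
  exact Nat.sInf_mem ⟨_, N, instN, hN, hfin, rfl, w, hw⟩

theorem natCast_minModelCard_le_mk {ψ : L.Formula ℕ} {M : Type} [L.Structure M] [M ⊨ T]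
    {v : ℕ → M} (hv : ψ.Realize v) : (T.minModelCard ψ : Cardinal) ≤ Cardinal.mk M := by
  rcases finite_or_infinite M with hfin | hinf
  · rw [← Nat.cast_card]
    exact Nat.cast_le.2 (Nat.sInf_le ⟨M, _, ‹M ⊨ T›, hfin, rfl, v, hv⟩)
  · exact Cardinal.natCast_le_aleph0.trans (Cardinal.infinite_iff.1 hinf)

variable (T)

noncomputable def witnessVars (φ : L.Formula ℕ) (P : Finset (ℕ × ℕ)) : Finset ℕ :=
  freshVars φ.freeVarFinset (T.minModelCard (φ.withArrangement P))

noncomputable def witness (φ : L.Formula ℕ) : L.Formula ℕ :=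
  Formula.iSup fun P : (φ.freeVarFinset ×ˢ φ.freeVarFinset).powerset =>
    φ.withArrangement P ⊓ Formula.arrangement (T.witnessVars φ P) (T.witnessVars φ P).diag

variable {T}

theorem isQF_witness {φ : L.Formula ℕ} (hφ : φ.IsQF) : (T.witness φ).IsQF :=
  BoundedFormula.IsQF.iSup fun P =>
    (Formula.isQF_withArrangement hφ P).inf (Formula.isQF_arrangement _ _)

theorem realize_witness {φ : L.Formula ℕ} {M : Type} [L.Structure M] {v : ℕ → M} :
    (T.witness φ).Realize v ↔ ∃ P ⊆ φ.freeVarFinset ×ˢ φ.freeVarFinset,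
      (φ.withArrangement P).Realize v ∧ Set.InjOn v (T.witnessVars φ P) := by
  simp only [witness, Formula.realize_iSup, Formula.realize_inf, Formula.realize_arrangement_diag,
    Subtype.exists, mem_powerset, exists_prop]

theorem witnessVars_subset_freeVarFinset_witness {φ : L.Formula ℕ} {P : Finset (ℕ × ℕ)}
    (hP : P ⊆ φ.freeVarFinset ×ˢ φ.freeVarFinset) :
    T.witnessVars φ P ⊆ (T.witness φ).freeVarFinset := by
  refine subset_trans ?_ (BoundedFormula.freeVarFinset_subset_iSup _ ⟨P, mem_powerset.2 hP⟩)
  simp only [BoundedFormula.freeVarFinset_inf]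
  exact (Formula.subset_freeVarFinset_arrangement _ _).trans subset_union_right

theorem freeVarFinset_subset_freeVarFinset_witness (φ : L.Formula ℕ) :
    φ.freeVarFinset ⊆ (T.witness φ).freeVarFinset := by
  refine subset_trans ?_
    (BoundedFormula.freeVarFinset_subset_iSup _ ⟨∅, empty_mem_powerset _⟩)
  simp only [Formula.withArrangement, BoundedFormula.freeVarFinset_inf, union_assoc]
  exact subset_union_left

theorem disjoint_witnessVars (φ : L.Formula ℕ) (P : Finset (ℕ × ℕ)) :
    Disjoint φ.freeVarFinset (T.witnessVars φ P) :=
  disjoint_freshVars _ _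

theorem realize_of_realize_witness {φ : L.Formula ℕ} {M : Type} [L.Structure M] {v : ℕ → M}
    (hv : (T.witness φ).Realize v) : φ.Realize v := by
  obtain ⟨P, -, hP, -⟩ := realize_witness.1 hv
  exact (Formula.realize_inf.1 hP).1

theorem exists_realize_witness {φ : L.Formula ℕ} {M : Type} [L.Structure M] [M ⊨ T]
    {v : ℕ → M} (hv : φ.Realize v) :
    ∃ w : ℕ → M, (∀ x ∉ (T.witness φ).freeVarFinset \ φ.freeVarFinset, w x = v x) ∧
      (T.witness φ).Realize w := by
  obtain ⟨P, hP, hPv⟩ := Formula.exists_realize_arrangement (L := L) φ.freeVarFinset v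
  have hvδ : (φ.withArrangement P).Realize v := Formula.realize_inf.2 ⟨hv, hPv⟩
  obtain ⟨w, hwv, hinj, -⟩ := exists_eqOn_compl_injOn_mapsTo v (T.witnessVars φ P)
    (S := Set.univ) (by
      rw [witnessVars, card_freshVars, Cardinal.mk_univ]
      exact natCast_minModelCard_le_mk hvδ)
  have hwφ : ∀ x ∈ φ.freeVarFinset, w x = v x := fun x hx =>
    hwv x (disjoint_left.1 (disjoint_witnessVars φ P) hx)
  refine ⟨w, fun x hx => hwv x fun hY => hx (mem_sdiff.2
    ⟨witnessVars_subset_freeVarFinset_witness hP hY,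
      disjoint_right.1 (disjoint_witnessVars φ P) hY⟩), realize_witness.2 ⟨P, hP, ?_, hinj⟩⟩
  refine Formula.realize_inf.2 ⟨(Formula.realize_congr fun x hx => (hwφ x hx).symm).1 hv, ?_⟩
  exact (Formula.realize_arrangement_iff_of_realize hPv).2 fun x hx y hy => by
    rw [hwφ x hx, hwφ y hy]

theorem exists_covering_model (hSF : StablyFiniteT L T) (hFS : FinitelySmoothT L T)
    {φ : L.Formula ℕ} (hφ : φ.IsQF) {M : Type} [L.Structure M] [M ⊨ T] {v : ℕ → M}
    (hv : (T.witness φ).Realize v) (V : Finset ℕ) :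
    ∃ (A : Type) (inst : L.Structure A), ModelsT L T A inst ∧ ∃ u : ℕ → A,
      RealizeIn L A inst (T.witness φ) u ∧
      (∀ x ∈ (T.witness φ).freeVarFinset ∪ V, ∀ y ∈ (T.witness φ).freeVarFinset ∪ V,
        (u x = u y ↔ v x = v y)) ∧
      ∀ a : A, ∃ x ∈ (T.witness φ).freeVarFinset ∪ V, u x = a := by
  classical
  obtain ⟨P, hP, hPv, hinj⟩ := realize_witness.1 hv
  set W := (T.witness φ).freeVarFinset ∪ V
  have hYW : T.witnessVars φ P ⊆ W :=
    (witnessVars_subset_freeVarFinset_witness hP).trans subset_union_left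
  have hVW : φ.freeVarFinset ⊆ W :=
    (freeVarFinset_subset_freeVarFinset_witness φ).trans subset_union_left
  have hψ := Formula.isQF_withArrangement hφ P
  obtain ⟨B, instB, hB, hBfin, hBcard, w₁, hw₁⟩ := minModelCard_mem hSF hψ hPv
  have hmin_le : T.minModelCard (φ.withArrangement P) ≤ #(W.image v) := by
    calc T.minModelCard (φ.withArrangement P) = #((T.witnessVars φ P).image v) := by
          rw [card_image_of_injOn hinj, witnessVars, card_freshVars]
      _ ≤ #(W.image v) := card_le_card (image_subset_image hYW)
  obtain ⟨A, instA, hA, hAcard, w₂, hw₂⟩ := hFS _ hψ B instB hB w₁ hw₁ #(W.image v) <| by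
    rw [← Nat.cast_card, hBcard]
    exact Nat.cast_le.2 hmin_le
  let _ := instA
  obtain ⟨hw₂φ, hw₂P⟩ := Formula.realize_inf.1 (show (φ.withArrangement P).Realize w₂ from hw₂)
  obtain ⟨hvφ, hvP⟩ := Formula.realize_inf.1 hPv
  obtain ⟨u, hu₂, hker, hcov⟩ := exists_eqOn_surjective_of_mk_eq hVW
    ((Formula.realize_arrangement_iff_of_realize hvP).1 hw₂P) hAcard
  refine ⟨A, instA, hA, u, realize_witness.2 ⟨P, hP, Formula.realize_inf.2 ⟨?_, ?_⟩, ?_⟩,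
    hker, hcov⟩
  · exact (Formula.realize_congr fun x hx => (hu₂ x hx).symm).1 hw₂φ
  · exact (Formula.realize_arrangement_iff_of_realize hvP).2 fun x hx y hy =>
      hker x (hVW hx) y (hVW hy)
  · exact fun x hx y hy hxy => hinj hx hy ((hker x (hYW hx) y (hYW hy)).1 hxy)

variable (T)

theorem isStrongPreWitness_witness (hSF : StablyFiniteT L T) (hFS : FinitelySmoothT L T) :
    IsStrongPreWitness L T T.witness := by
  refine ⟨⟨fun φ hφ => isQF_witness hφ, fun φ hφ M inst hM v => ?_, ?_⟩, ?_⟩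
  · let _ := inst
    have _ : M ⊨ T := hM
    refine ⟨exists_realize_witness, fun ⟨w, hwv, hw⟩ => ?_⟩
    refine (Formula.realize_congr fun x hx => hwv x fun hx' => ?_).1 (realize_of_realize_witness hw)
    exact (mem_sdiff.1 hx').2 hx
  · rintro φ hφ ⟨M, inst, hM, v, hv⟩
    let _ := inst
    have _ : M ⊨ T := hM
    obtain ⟨A, instA, hA, u, hu, -, hcov⟩ := exists_covering_model hSF hFS hφ hv ∅
    exact ⟨A, instA, hA, u, realize_of_realize_witness hu, by simpa using hcov⟩
  · rintro φ hφ V E ⟨M, inst, hM, v, hv, hE⟩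
    let _ := inst
    have _ : M ⊨ T := hM
    obtain ⟨A, instA, hA, u, hu, hker, hcov⟩ := exists_covering_model hSF hFS hφ hv V
    refine ⟨A, instA, hA, u, hu, fun x hx y hy => ?_, hcov⟩
    rw [hE x hx y hy]
    exact (hker x (mem_union_right _ hx) y (mem_union_right _ hy)).symm

theorem stablyInfinite_of_stablyFinite_of_finitelySmooth (hSF : StablyFiniteT L T)
    (hFS : FinitelySmoothT L T) : StablyInfiniteT L T := by
  rintro φ hφ ⟨M, inst, hM, v, hv⟩
  obtain ⟨N₀, inst₀, hN₀, hfin, -, v₀, hv₀⟩ := hSF φ hφ M inst hM v hv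
  have hlarge : ∀ k : ℕ, ∃ (N : Type) (inst : L.Structure N), ModelsT L T N inst ∧
      Cardinal.mk N = (Nat.card N₀ + k + 1 : ℕ) ∧ ∃ w : ℕ → N, RealizeIn L N inst φ w :=
    fun k => hFS φ hφ N₀ inst₀ hN₀ v₀ hv₀ _ <| by
      rw [← Nat.cast_card]
      exact Nat.cast_le.2 (by omega)
  choose N inst hN hcard w hw using hlarge
  let _ := inst
  have _ : ∀ k, N k ⊨ T := hN
  exact T.exists_infinite_model_of_natCast_lt_mk N w hw fun k => by
    rw [hcard k]
    exact Nat.cast_lt.2 (by omega)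

variable {T}

theorem stablyFinite_of_isStrongPreWitness {wit : L.Formula ℕ → L.Formula ℕ}
    (hwit : IsStrongPreWitness L T wit) : StablyFiniteT L T := by
  classical
  obtain ⟨⟨-, hequiv, -⟩, hstrong⟩ := hwit
  intro φ hφ M inst hM v hv
  obtain ⟨w, -, hw⟩ := (hequiv φ hφ M inst hM v).1 hv
  set W := (wit φ).freeVarFinset
  obtain ⟨A, instA, hA, u, hu, hker, hcov⟩ :=
    hstrong φ hφ W (Setoid.ker w) ⟨M, inst, hM, w, hw, fun _ _ _ _ => Iff.rfl⟩
  have hcard : Cardinal.mk A = (W.image w).card := by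
    rw [Cardinal.mk_eq_card_image_of_forall_exists (W := W) (by simpa [W] using hcov),
      card_image_eq_card_image_of_eq_iff fun x hx y hy => (hker x hx y hy).symm]
  refine ⟨A, instA, hA, Cardinal.lt_aleph0_iff_finite.1 (hcard ▸ Cardinal.natCast_lt_aleph0),
    hcard ▸ Cardinal.card_le_of_finset _, u, (hequiv φ hφ A instA hA u).2 ⟨u, fun _ _ => rfl, hu⟩⟩

theorem finitelySmooth_of_isStrongPreWitness (hSI : StablyInfiniteT L T)
    {wit : L.Formula ℕ → L.Formula ℕ} (hwit : IsStrongPreWitness L T wit) :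
    FinitelySmoothT L T := by
  classical
  obtain ⟨⟨hqf, hequiv, -⟩, hstrong⟩ := hwit
  intro φ hφ M inst hM v hv κ hκ
  let _ := inst
  obtain ⟨w, -, hw⟩ := (hequiv φ hφ M inst hM v).1 hv
  set V := (wit φ).freeVarFinset
  obtain ⟨P, -, hPw⟩ := Formula.exists_realize_arrangement (L := L) V w
  obtain ⟨M', inst', hM', hinf, w', hw'⟩ := hSI _ ((hqf φ hφ).inf (Formula.isQF_arrangement V P))
    ⟨M, inst, hM, w, Formula.realize_inf.2 ⟨hw, hPw⟩⟩
  let _ := inst'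
  obtain ⟨hw'wit, hw'P⟩ := Formula.realize_inf.1 (show (wit φ ⊓ _).Realize w' from hw')
  have hcard' : #(V.image w') = #(V.image w) := card_image_eq_card_image_of_eq_iff
    ((Formula.realize_arrangement_iff_of_realize hPw).1 hw'P)
  obtain ⟨Z, w'', hw'', hcard''⟩ := exists_eqOn_card_image_eq w' V (n := κ) (by
    rw [hcard']
    exact Nat.cast_le.1 ((Cardinal.card_le_of_finset _).trans hκ))
  obtain ⟨A, instA, hA, u, hu, hker, hcov⟩ := hstrong φ hφ (V ∪ Z) (Setoid.ker w'')
    ⟨M', inst', hM', w'', (Formula.realize_congr fun x hx => (hw'' x hx).symm).1 hw'wit,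
      fun _ _ _ _ => Iff.rfl⟩
  refine ⟨A, instA, hA, ?_, u, (hequiv φ hφ A instA hA u).2 ⟨u, fun _ _ => rfl, hu⟩⟩
  rw [Cardinal.mk_eq_card_image_of_forall_exists (W := V ∪ Z) (by simpa [V] using hcov),
    card_image_eq_card_image_of_eq_iff fun x hx y hy => (hker x hx y hy).symm, hcard'']

end Theory

end FirstOrder.Language

/-- A theory is stably finite and finitely smooth if and only if it is stably infinite
and has a strong pre-witness. -/
theorem stmt_15 (L : FirstOrder.Language.{u, v}) (T : L.Theory) :
    (StablyFiniteT L T ∧ FinitelySmoothT L T) ↔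
      (StablyInfiniteT L T ∧ ∃ wit : L.Formula ℕ → L.Formula ℕ, IsStrongPreWitness L T wit) :=
  ⟨fun ⟨hSF, hFS⟩ => ⟨T.stablyInfinite_of_stablyFinite_of_finitelySmooth hSF hFS, T.witness,
      T.isStrongPreWitness_witness hSF hFS⟩,
    fun ⟨hSI, _, hwit⟩ => ⟨Theory.stablyFinite_of_isStrongPreWitness hwit,
      Theory.finitelySmooth_of_isStrongPreWitness hSI hwit⟩⟩
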